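/- Let α > 0, β > 0 and let P_R be the right Poincaré half-return map parametrized by (y(t), P(t)), t ∈ (π, t̂), as above. Then the second derivative of P_R with respect to y satisfies d²P_R/dy² = (2β²/(1+α²)) · (sinh(αt) − α sin t) · e^{3αt} / P(t)³ < 0 for all t ∈ (π, t̂); in particular P_R is strictly concave. -/

import Mathlib

open Real

noncomputable def psiPlus (α t : ℝ) : ℝ :=
  1 - Real.exp (α * t) * (Real.cos t - α * Real.sin t)

noncomputable def psiMinus (α t : ℝ) : ℝ :=
  1 - Real.exp (-(α * t)) * (Real.cos t + α * Real.sin t)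

noncomputable def yPar (α β t : ℝ) : ℝ :=
  -(β / (1 + α ^ 2)) * Real.exp (-(α * t)) * psiPlus α t / Real.sin t

noncomputable def PPar (α β t : ℝ) : ℝ :=
  (β / (1 + α ^ 2)) * Real.exp (α * t) * psiMinus α t / Real.sin t

/-!
Along the half-return orbit the map `P_R` is given parametrically by `t ↦ (y(t), P(t))`, and
`y'(t) = -(β/(1+α²)) ψ₋(t)/sin² t` vanishes nowhere on `(π, 2π)`. The inverse function theorem
therefore turns the parametrisation into `dP_R/dy = P'(t)/y'(t) = -ψ₊(t)/ψ₋(t)`, and once more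
into `d²P_R/dy² = (d/dt)(-ψ₊/ψ₋) / y'(t)`. Since `ψ₊' = (1+α²) e^{αt} sin t` and
`ψ₋' = (1+α²) e^{-αt} sin t`, the numerator collapses through
`e^{αt} ψ₋ - e^{-αt} ψ₊ = 2 (sinh (αt) - α sin t)`, which gives the formula; its sign is that of
`P(t)³ < 0`.
-/

open Filter Topology Set

theorem HasStrictDerivAt.hasDerivAt_of_eventually_comp_eq {𝕜 : Type*}
    [NontriviallyNormedField 𝕜] [CompleteSpace 𝕜] {f g h : 𝕜 → 𝕜} {f' g' a : 𝕜}
    (hf : HasStrictDerivAt f f' a) (hf' : f' ≠ 0) (hg : HasDerivAt g g' a)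
    (hfg : ∀ᶠ x in 𝓝 a, h (f x) = g x) : HasDerivAt h (g' / f') (f a) := by
  set τ := hf.localInverse f f' a hf'
  have hτa : τ (f a) = a := (hf.eventually_left_inverse hf').self_of_nhds
  have hτ : HasDerivAt τ f'⁻¹ (f a) := (hf.to_localInverse hf').hasDerivAt
  have hτ_tendsto : Tendsto τ (𝓝 (f a)) (𝓝 a) := by
    simpa only [hτa] using hτ.continuousAt.tendsto
  have h_eq : h =ᶠ[𝓝 (f a)] g ∘ τ := by
    filter_upwards [hf.eventually_right_inverse hf', hτ_tendsto.eventually hfg] with y hy hy'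
    rw [Function.comp_apply, ← hy', hy]
  rw [← hτa] at hg
  rw [div_eq_mul_inv]
  exact (hg.comp (f a) hτ).congr_of_eventuallyEq h_eq

lemma hasDerivAt_exp_mul (α t : ℝ) :
    HasDerivAt (fun t => Real.exp (α * t)) (α * Real.exp (α * t)) t := by
  simpa [mul_comm] using ((hasDerivAt_id t).const_mul α).exp

lemma hasDerivAt_exp_neg_mul (α t : ℝ) :
    HasDerivAt (fun t => Real.exp (-(α * t))) (-α * Real.exp (-(α * t))) t := by
  simpa [neg_mul] using hasDerivAt_exp_mul (-α) t

lemma sin_neg_of_mem_Ioo {t : ℝ} (ht : t ∈ Ioo π (2 * π)) : Real.sin t < 0 := by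
  rw [← Real.sin_sub_two_pi]
  exact Real.sin_neg_of_neg_of_neg_pi_lt (by linarith [ht.2]) (by linarith [ht.1])

section ReturnMap

variable {α β t : ℝ}

lemma hasDerivAt_psiPlus (α t : ℝ) :
    HasDerivAt (psiPlus α) ((1 + α ^ 2) * Real.exp (α * t) * Real.sin t) t :=
  (((hasDerivAt_exp_mul α t).fun_mul
    ((hasDerivAt_cos t).fun_sub ((hasDerivAt_sin t).const_mul α))).const_sub 1).congr_deriv
    (by ring)

lemma hasDerivAt_psiMinus (α t : ℝ) :
    HasDerivAt (psiMinus α) ((1 + α ^ 2) * Real.exp (-(α * t)) * Real.sin t) t :=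
  (((hasDerivAt_exp_neg_mul α t).fun_mul
    ((hasDerivAt_cos t).fun_add ((hasDerivAt_sin t).const_mul α))).const_sub 1).congr_deriv
    (by ring)

lemma hasDerivAt_yPar (α β : ℝ) (ht : Real.sin t ≠ 0) :
    HasDerivAt (yPar α β) (-(β / (1 + α ^ 2)) * psiMinus α t / Real.sin t ^ 2) t := by
  refine ((((hasDerivAt_exp_neg_mul α t).const_mul (-(β / (1 + α ^ 2)))).fun_mul
    (hasDerivAt_psiPlus α t)).fun_div (hasDerivAt_sin t) ht).congr_deriv ?_
  simp only [psiPlus, psiMinus, Real.exp_neg]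
  field_simp
  linear_combination -β * Real.exp (α * t) * sin_sq_add_cos_sq t

lemma hasStrictDerivAt_yPar (α β : ℝ) (ht : Real.sin t ≠ 0) :
    HasStrictDerivAt (yPar α β) (-(β / (1 + α ^ 2)) * psiMinus α t / Real.sin t ^ 2) t := by
  have hC1 : ContDiffAt ℝ 1 (yPar α β) t := by
    unfold yPar psiPlus
    fun_prop (disch := exact ht)
  exact hC1.hasStrictDerivAt' (hasDerivAt_yPar α β ht) one_ne_zero

lemma hasDerivAt_PPar (α β : ℝ) (ht : Real.sin t ≠ 0) :
    HasDerivAt (PPar α β) ((β / (1 + α ^ 2)) * psiPlus α t / Real.sin t ^ 2) t := by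
  refine ((((hasDerivAt_exp_mul α t).const_mul (β / (1 + α ^ 2))).fun_mul
    (hasDerivAt_psiMinus α t)).fun_div (hasDerivAt_sin t) ht).congr_deriv ?_
  simp only [psiPlus, psiMinus, Real.exp_neg]
  field_simp
  linear_combination β * sin_sq_add_cos_sq t

lemma exp_mul_psiMinus_sub_exp_neg_mul_psiPlus (α t : ℝ) :
    Real.exp (α * t) * psiMinus α t - Real.exp (-(α * t)) * psiPlus α t
      = 2 * (Real.sinh (α * t) - α * Real.sin t) := by
  have h : Real.exp (α * t) * Real.exp (-(α * t)) = 1 := by rw [← Real.exp_add]; simp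
  rw [Real.sinh_eq]
  simp only [psiPlus, psiMinus]
  linear_combination -2 * α * Real.sin t * h

lemma hasDerivAt_neg_psiPlus_div_psiMinus (ht : psiMinus α t ≠ 0) :
    HasDerivAt (fun t => -(psiPlus α t / psiMinus α t))
      (-(2 * (1 + α ^ 2)) * Real.sin t * (Real.sinh (α * t) - α * Real.sin t)
        / psiMinus α t ^ 2) t := by
  refine ((hasDerivAt_psiPlus α t).fun_div (hasDerivAt_psiMinus α t) ht).fun_neg.congr_deriv ?_
  linear_combination -(1 + α ^ 2) * Real.sin t / psiMinus α t ^ 2 *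
    exp_mul_psiMinus_sub_exp_neg_mul_psiPlus α t

lemma psiMinus_pos (hα : 0 < α) (ht : t ∈ Ioo π (2 * π)) : 0 < psiMinus α t := by
  have hsin := sin_neg_of_mem_Ioo ht
  have hexp : Real.exp (-(α * t)) < 1 :=
    Real.exp_lt_one_iff.2 (neg_neg_of_pos (mul_pos hα (pi_pos.trans ht.1)))
  have hcos : Real.cos t + α * Real.sin t < 1 := by nlinarith [Real.cos_le_one t]
  unfold psiMinus
  nlinarith [Real.exp_pos (-(α * t))]

lemma sinh_sub_mul_sin_pos (hα : 0 < α) (ht : t ∈ Ioo π (2 * π)) :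
    0 < Real.sinh (α * t) - α * Real.sin t := by
  have hsinh : 0 < Real.sinh (α * t) := Real.sinh_pos_iff.2 (mul_pos hα (pi_pos.trans ht.1))
  nlinarith [sin_neg_of_mem_Ioo ht]

lemma PPar_neg (hα : 0 < α) (hβ : 0 < β) (ht : t ∈ Ioo π (2 * π)) : PPar α β t < 0 :=
  div_neg_of_pos_of_neg (by have := psiMinus_pos hα ht; positivity) (sin_neg_of_mem_Ioo ht)

lemma deriv_yPar_neg (hα : 0 < α) (hβ : 0 < β) (ht : t ∈ Ioo π (2 * π)) :
    -(β / (1 + α ^ 2)) * psiMinus α t / Real.sin t ^ 2 < 0 := by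
  have hψ := psiMinus_pos hα ht
  have hsin := (sin_neg_of_mem_Ioo ht).ne
  rw [neg_mul, neg_div]
  exact neg_neg_of_pos (by positivity)

lemma hasDerivAt_of_comp_yPar_eq_PPar {PR : ℝ → ℝ} (hα : 0 < α) (hβ : 0 < β)
    (ht : t ∈ Ioo π (2 * π)) (hPR : ∀ᶠ s in 𝓝 t, PR (yPar α β s) = PPar α β s) :
    HasDerivAt PR (-(psiPlus α t / psiMinus α t)) (yPar α β t) := by
  have hsin := (sin_neg_of_mem_Ioo ht).ne
  have hψ := (psiMinus_pos hα ht).ne'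
  refine ((hasStrictDerivAt_yPar α β hsin).hasDerivAt_of_eventually_comp_eq
    (deriv_yPar_neg hα hβ ht).ne
    (hasDerivAt_PPar α β hsin) hPR).congr_deriv ?_
  field_simp

lemma slope_deriv_div_deriv_yPar (hβ : β ≠ 0) (hsin : Real.sin t ≠ 0)
    (hψ : psiMinus α t ≠ 0) :
    (-(2 * (1 + α ^ 2)) * Real.sin t * (Real.sinh (α * t) - α * Real.sin t) / psiMinus α t ^ 2)
        / (-(β / (1 + α ^ 2)) * psiMinus α t / Real.sin t ^ 2)
      = (2 * β ^ 2 / (1 + α ^ 2)) * (Real.sinh (α * t) - α * Real.sin t) *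
          Real.exp (3 * α * t) / (PPar α β t) ^ 3 := by
  have hexp : Real.exp (3 * α * t) = Real.exp (α * t) ^ 3 := by
    rw [← Real.exp_nat_mul]; ring_nf
  rw [hexp, PPar]
  field_simp

end ReturnMap

theorem stmt_11_general (α β th : ℝ) (hα : 0 < α) (hβ : 0 < β)
    (hth : th ∈ Set.Ioo π (2 * π))
    (PR : ℝ → ℝ) (hPR : ∀ t ∈ Set.Ioo π th, PR (yPar α β t) = PPar α β t) :
    ∀ t ∈ Set.Ioo π th,
      deriv (deriv PR) (yPar α β t)
        = (2 * β ^ 2 / (1 + α ^ 2)) * (Real.sinh (α * t) - α * Real.sin t) *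
            Real.exp (3 * α * t) / (PPar α β t) ^ 3 ∧
      (2 * β ^ 2 / (1 + α ^ 2)) * (Real.sinh (α * t) - α * Real.sin t) *
          Real.exp (3 * α * t) / (PPar α β t) ^ 3 < 0 := by
  intro t ht
  have hI : Ioo π th ⊆ Ioo π (2 * π) := Ioo_subset_Ioo_right hth.2.le
  have hsin := (sin_neg_of_mem_Ioo (hI ht)).ne
  have hψ := (psiMinus_pos hα (hI ht)).ne'
  have hslope : ∀ s ∈ Ioo π th,
      HasDerivAt PR (-(psiPlus α s / psiMinus α s)) (yPar α β s) := fun s hs =>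
    hasDerivAt_of_comp_yPar_eq_PPar hα hβ (hI hs) (eventually_of_mem (Ioo_mem_nhds hs.1 hs.2) hPR)
  have hsecond := (hasStrictDerivAt_yPar α β hsin).hasDerivAt_of_eventually_comp_eq
    (deriv_yPar_neg hα hβ (hI ht)).ne (hasDerivAt_neg_psiPlus_div_psiMinus hψ)
    (eventually_of_mem (Ioo_mem_nhds ht.1 ht.2) fun s hs => (hslope s hs).deriv)
  rw [hsecond.deriv, slope_deriv_div_deriv_yPar hβ.ne' hsin hψ]
  have hsinh_sub := sinh_sub_mul_sin_pos hα (hI ht)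
  exact ⟨rfl, div_neg_of_pos_of_neg (by positivity)
    (Odd.pow_neg (by decide) (PPar_neg hα hβ (hI ht)))⟩

/-- The second derivative of the right Poincaré half-return map `P_R` with respect to
the starting height `y` equals `(2β²/(1+α²))(sinh(αt) - α sin t)e^{3αt}/P(t)³`, which is
negative on `(π, t̂)`; in particular `P_R` is strictly concave. -/
theorem stmt_11 (α β th : ℝ) (hα : 0 < α) (hβ : 0 < β)
    (hth : th ∈ Set.Ioo π (2 * π)) (hroot : psiPlus α th = 0)
    (PR : ℝ → ℝ) (hPR : ∀ t ∈ Set.Ioo π th, PR (yPar α β t) = PPar α β t) :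
    ∀ t ∈ Set.Ioo π th,
      deriv (deriv PR) (yPar α β t)
        = (2 * β ^ 2 / (1 + α ^ 2)) * (Real.sinh (α * t) - α * Real.sin t) *
            Real.exp (3 * α * t) / (PPar α β t) ^ 3 ∧
      (2 * β ^ 2 / (1 + α ^ 2)) * (Real.sinh (α * t) - α * Real.sin t) *
          Real.exp (3 * α * t) / (PPar α β t) ^ 3 < 0 :=
  stmt_11_general α β th hα hβ hth PR hPR
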